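/- Let Q = [u₁,...,uₙ] be a spherical polygon with vertices in general position, and let i, j be indices with j ∉ {i−1, i, i+1} (mod n), so that the edges [u_i, u_{i+1}] and [u_j, u_{j+1}] are non-adjacent. Then these two edges have a common point if and only if the following sign relations hold: sign[u_i,u_{i+1},u_j] = sign[u_{i+1},u_j,u_{j+1}], sign[u_i,u_{i+1},u_{j+1}] = sign[u_i,u_j,u_{j+1}], and sign[u_i,u_{i+1},u_j] = −sign[u_i,u_{i+1},u_{j+1}]. -/

import Mathlib

open scoped RealInnerProductSpace

noncomputable section

/-- ℝ³ as EuclideanSpace. -/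
abbrev E3 : Type := EuclideanSpace ℝ (Fin 3)

/-- Determinant of the 3×3 matrix with columns u, v, w. -/
def det3 (u v w : E3) : ℝ :=
  Matrix.det !![u 0, v 0, w 0; u 1, v 1, w 1; u 2, v 2, w 2]

/-- The minimizing great-circle arc joining two non-antipodal points of S². -/
def sphericalEdge (u v : E3) : Set E3 :=
  {p | ∃ a b : ℝ, 0 ≤ a ∧ 0 ≤ b ∧ (a ≠ 0 ∨ b ≠ 0) ∧
    p = ‖a • u + b • v‖⁻¹ • (a • u + b • v)}

/-- A spherical polygon: a cyclic sequence of distinct points of S² with consecutive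
vertices non-antipodal. -/
def IsSphericalPolygon {n : ℕ} (u : ZMod n → E3) : Prop :=
  (∀ i, ‖u i‖ = 1) ∧ Function.Injective u ∧ (∀ i, u (i + 1) ≠ -(u i))

/-- The i-th edge of a spherical polygon. -/
def polyEdge {n : ℕ} (u : ZMod n → E3) (i : ZMod n) : Set E3 :=
  sphericalEdge (u i) (u (i + 1))

/-- A spherical polygon is simple if non-adjacent edges are disjoint and adjacent
edges meet only in their common vertex. -/
def IsSimple {n : ℕ} (u : ZMod n → E3) : Prop :=
  (∀ i j : ZMod n, j ≠ i → j ≠ i + 1 → i ≠ j + 1 →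
      Disjoint (polyEdge u i) (polyEdge u j)) ∧
  (∀ i : ZMod n, polyEdge u i ∩ polyEdge u (i + 1) = {u (i + 1)})

/-- A family of points of S² is balanced if it is not contained in any closed
hemisphere. -/
def IsBalanced {ι : Type*} (u : ι → E3) : Prop :=
  ∀ w : E3, w ≠ 0 → ∃ i, ⟪u i, w⟫ < 0

/-- Points in general position: no three on a common great circle. -/
def GeneralPosition {ι : Type*} (u : ι → E3) : Prop :=
  ∀ i j k : ι, i ≠ j → i ≠ k → j ≠ k → det3 (u i) (u j) (u k) ≠ 0

/-- Spherical inflection of a spherical polygon at index i. -/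
def Inflection {n : ℕ} (u : ZMod n → E3) (i : ZMod n) : Prop :=
  det3 (u (i - 1)) (u i) (u (i + 1)) * det3 (u i) (u (i + 1)) (u (i + 2)) < 0

/-- The polygon Q − uᵢ obtained by deleting the vertex uᵢ, reindexed over ZMod (n-1),
starting at u_{i+1}. -/
def eraseVertex {n : ℕ} (u : ZMod n → E3) (i : ZMod n) : ZMod (n - 1) → E3 :=
  fun j => u (i + 1 + (j.val : ZMod n))

/-- The open cone spanned by three vectors. -/
def openCone3 (a b c : E3) : Set E3 :=
  {x | ∃ l₁ l₂ l₃ : ℝ, 0 < l₁ ∧ 0 < l₂ ∧ 0 < l₃ ∧ x = l₁ • a + l₂ • b + l₃ • c}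

end

/-!
A point of the edge `[A, B]` is a normalized nonzero vector of the cone spanned by `A` and `B`,
so two edges meet iff `a • A + b • B = c • C + d • D ≠ 0` for some `a, b, c, d ≥ 0`. Applying the
forms `[A,B,·]`, `[C,D,·]`, `[B,C,·]` to this relation gives `c[A,B,C] + d[A,B,D] = 0`,
`a[A,C,D] + b[B,C,D] = 0` and `a[A,B,C] = d[B,C,D]`, which force the sign relations.
Conversely, under the sign relations the Cramer identity
`[B,C,D] A - [A,C,D] B = [A,B,C] D - [A,B,D] C`, multiplied by `[A,B,C]`, has nonnegative
coefficients on both sides and so exhibits a common nonzero vector of the two cones.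
-/

lemma det3_eq (u v w : E3) : det3 u v w =
    u 0 * v 1 * w 2 - u 0 * v 2 * w 1 - u 1 * v 0 * w 2 + u 1 * v 2 * w 0
      + u 2 * v 0 * w 1 - u 2 * v 1 * w 0 := by
  simp [det3, Matrix.det_fin_three]
  ring

lemma det3_add_smul_right (u v x y : E3) (a b : ℝ) :
    det3 u v (a • x + b • y) = a * det3 u v x + b * det3 u v y := by
  simp only [det3_eq, PiLp.add_apply, PiLp.smul_apply, smul_eq_mul]
  ring

lemma det3_zero_right (u v : E3) : det3 u v 0 = 0 := by
  simp [det3_eq]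

lemma det3_self_left (u v : E3) : det3 u v u = 0 := by
  rw [det3_eq]; ring

lemma det3_self_right (u v : E3) : det3 u v v = 0 := by
  rw [det3_eq]; ring

lemma det3_rotate (u v w : E3) : det3 u v w = det3 w u v := by
  simp only [det3_eq]; ring

lemma det3_cramer (a b c d : E3) :
    det3 b c d • a - det3 a c d • b = det3 a b c • d - det3 a b d • c := by
  ext k
  obtain rfl | rfl | rfl : k = 0 ∨ k = 1 ∨ k = 2 := by omega
  all_goals
    simp only [PiLp.sub_apply, PiLp.smul_apply, smul_eq_mul, det3_eq]
    ring

lemma linearIndependent_of_det3_ne_zero {u v w : E3} (h : det3 u v w ≠ 0) :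
    LinearIndependent ℝ ![u, v] := by
  refine LinearIndependent.pair_iff.mpr fun s t hst => ?_
  have hs := congrArg (det3 v w) hst
  rw [det3_add_smul_right, det3_self_left, det3_rotate v w u, det3_zero_right] at hs
  have ht := congrArg (det3 w u) hst
  rw [det3_add_smul_right, det3_self_right, ← det3_rotate, det3_zero_right] at ht
  simp only [mul_zero, add_zero, zero_add] at hs ht
  exact ⟨(mul_eq_zero.mp hs).resolve_right h, (mul_eq_zero.mp ht).resolve_right h⟩

lemma Real.sign_eq_sign_iff {x y : ℝ} (hx : x ≠ 0) (hy : y ≠ 0) :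
    Real.sign x = Real.sign y ↔ 0 < x * y := by
  rcases hx.lt_or_gt with hx | hx <;> rcases hy.lt_or_gt with hy | hy <;>
    simp only [Real.sign_of_neg, Real.sign_of_pos, hx, hy] <;> norm_num <;> nlinarith

lemma Real.sign_eq_neg_sign_iff {x y : ℝ} (hx : x ≠ 0) (hy : y ≠ 0) :
    Real.sign x = -Real.sign y ↔ x * y < 0 := by
  rw [← Real.sign_neg, Real.sign_eq_sign_iff hx (neg_ne_zero.mpr hy), mul_neg, neg_pos]

lemma pos_and_pos_and_mul_neg_of_mul_add_mul_eq_zero {p q x y : ℝ} (hp : 0 ≤ p) (hq : 0 ≤ q)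
    (hpq : p ≠ 0 ∨ q ≠ 0) (hx : x ≠ 0) (hy : y ≠ 0) (h : p * x + q * y = 0) :
    0 < p ∧ 0 < q ∧ x * y < 0 := by
  have hp' : 0 < p := hp.lt_of_ne' fun hp0 => by simp_all
  have hq' : 0 < q := hq.lt_of_ne' fun hq0 => by simp_all
  refine ⟨hp', hq', neg_of_mul_neg_right (?_ : p * (x * y) < 0) hp⟩
  have hqy : p * (x * y) = -(q * (y * y)) := by linear_combination y * h
  rw [hqy, neg_neg_iff_pos]
  exact mul_pos hq' (mul_self_pos.mpr hy)

section

variable {V : Type*} [AddCommMonoid V] [Module ℝ V]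

def pairCone (x y : V) : Set V :=
  {z | ∃ a b : ℝ, 0 ≤ a ∧ 0 ≤ b ∧ z = a • x + b • y}

lemma smul_mem_pairCone {x y z : V} (hz : z ∈ pairCone x y) {r : ℝ} (hr : 0 ≤ r) :
    r • z ∈ pairCone x y := by
  obtain ⟨a, b, ha, hb, rfl⟩ := hz
  exact ⟨r * a, r * b, mul_nonneg hr ha, mul_nonneg hr hb, by rw [smul_add, smul_smul, smul_smul]⟩

end

lemma ne_zero_and_mem_pairCone_of_mem_sphericalEdge {A B p : E3}
    (hAB : LinearIndependent ℝ ![A, B]) (hp : p ∈ sphericalEdge A B) :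
    p ≠ 0 ∧ p ∈ pairCone A B := by
  obtain ⟨a, b, ha, hb, hab, rfl⟩ := hp
  have hv : a • A + b • B ≠ 0 := fun h0 => by
    obtain ⟨rfl, rfl⟩ := LinearIndependent.pair_iff.mp hAB a b h0
    simp at hab
  exact ⟨smul_ne_zero (inv_ne_zero (norm_ne_zero_iff.mpr hv)) hv,
    smul_mem_pairCone ⟨a, b, ha, hb, rfl⟩ (inv_nonneg.mpr (norm_nonneg _))⟩

lemma inv_norm_smul_mem_sphericalEdge {A B z : E3} (hz : z ≠ 0) (hAB : z ∈ pairCone A B) :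
    ‖z‖⁻¹ • z ∈ sphericalEdge A B := by
  obtain ⟨a, b, ha, hb, rfl⟩ := hAB
  refine ⟨a, b, ha, hb, ?_, rfl⟩
  by_contra! h
  simp [h.1, h.2] at hz

lemma sphericalEdge_inter_nonempty_iff {A B C D : E3} (hAB : LinearIndependent ℝ ![A, B])
    (hCD : LinearIndependent ℝ ![C, D]) :
    (sphericalEdge A B ∩ sphericalEdge C D).Nonempty ↔
      ∃ z ≠ 0, z ∈ pairCone A B ∧ z ∈ pairCone C D := by
  constructor
  · rintro ⟨p, hpAB, hpCD⟩
    obtain ⟨hp, hpAB⟩ := ne_zero_and_mem_pairCone_of_mem_sphericalEdge hAB hpAB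
    exact ⟨p, hp, hpAB, (ne_zero_and_mem_pairCone_of_mem_sphericalEdge hCD hpCD).2⟩
  · rintro ⟨z, hz, hzAB, hzCD⟩
    exact ⟨‖z‖⁻¹ • z, inv_norm_smul_mem_sphericalEdge hz hzAB,
      inv_norm_smul_mem_sphericalEdge hz hzCD⟩

section

variable {A B C D z : E3}

lemma signs_of_mem_pairCone_inter (h₁ : det3 A B C ≠ 0) (h₂ : det3 A B D ≠ 0)
    (h₃ : det3 A C D ≠ 0) (h₄ : det3 B C D ≠ 0)
    (hz : z ≠ 0) (hzAB : z ∈ pairCone A B) (hzCD : z ∈ pairCone C D) :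
    0 < det3 A B C * det3 B C D ∧ 0 < det3 A B D * det3 A C D ∧
      det3 A B C * det3 A B D < 0 := by
  obtain ⟨a, b, ha, hb, rfl⟩ := hzAB
  obtain ⟨c, d, hc, hd, hzCD⟩ := hzCD
  have hab : a ≠ 0 ∨ b ≠ 0 := by
    by_contra! h
    simp [h.1, h.2] at hz
  have hcd : c ≠ 0 ∨ d ≠ 0 := by
    by_contra! h
    simp [hzCD, h.1, h.2] at hz
  have hAB := congrArg (det3 A B) hzCD
  have hCD := congrArg (det3 C D) hzCD
  have hBC := congrArg (det3 B C) hzCD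
  simp only [det3_add_smul_right, det3_self_left, det3_self_right, mul_zero, add_zero,
    zero_add] at hAB hCD hBC
  rw [det3_rotate C D A, det3_rotate C D B] at hCD
  rw [det3_rotate B C A] at hBC
  obtain ⟨hc, hd, h₁₂⟩ :=
    pos_and_pos_and_mul_neg_of_mul_add_mul_eq_zero hc hd hcd h₁ h₂ hAB.symm
  obtain ⟨ha, hb, h₃₄⟩ := pos_and_pos_and_mul_neg_of_mul_add_mul_eq_zero ha hb hab h₃ h₄ hCD
  have h₁₄ : 0 < det3 A B C * det3 B C D := by
    refine pos_of_mul_pos_right ?_ ha.le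
    rw [← mul_assoc, hBC, mul_assoc]
    exact mul_pos hd (mul_self_pos.mpr h₄)
  refine ⟨h₁₄, pos_of_mul_pos_right ?_ h₁₄.le, h₁₂⟩
  linear_combination mul_pos_of_neg_of_neg h₁₂ h₃₄

lemma exists_mem_pairCone_inter_of_signs (h₁₄ : 0 < det3 A B C * det3 B C D)
    (h₂₃ : 0 < det3 A B D * det3 A C D) (h₁₂ : det3 A B C * det3 A B D < 0) :
    ∃ z ≠ 0, z ∈ pairCone A B ∧ z ∈ pairCone C D := by
  set s := det3 A B C
  have h₁₃ : s * det3 A C D < 0 := by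
    refine neg_of_mul_neg_left (?_ : _ * (det3 A B D * det3 A B D) < 0) (mul_self_nonneg _)
    linear_combination mul_neg_of_neg_of_pos h₁₂ h₂₃
  refine ⟨s • (det3 B C D • A - det3 A C D • B), ?_, ⟨s * det3 B C D, -(s * det3 A C D),
    h₁₄.le, by linarith, by module⟩, ⟨-(s * det3 A B D), s * s, by linarith,
    mul_self_nonneg s, by rw [det3_cramer]; module⟩⟩
  intro h0
  have hAB := linearIndependent_of_det3_ne_zero (left_ne_zero_of_mul h₁₄.ne')
  exact h₁₄.ne' (LinearIndependent.pair_iff.mp hAB (s * det3 B C D) (-(s * det3 A C D))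
    (by rw [← h0]; module)).1

lemma exists_mem_pairCone_inter_iff (h₁ : det3 A B C ≠ 0) (h₂ : det3 A B D ≠ 0)
    (h₃ : det3 A C D ≠ 0) (h₄ : det3 B C D ≠ 0) :
    (∃ z ≠ 0, z ∈ pairCone A B ∧ z ∈ pairCone C D) ↔
      0 < det3 A B C * det3 B C D ∧ 0 < det3 A B D * det3 A C D ∧
        det3 A B C * det3 A B D < 0 :=
  ⟨fun ⟨_, hz, hzAB, hzCD⟩ => signs_of_mem_pairCone_inter h₁ h₂ h₃ h₄ hz hzAB hzCD,
    fun ⟨h₁₄, h₂₃, h₁₂⟩ => exists_mem_pairCone_inter_of_signs h₁₄ h₂₃ h₁₂⟩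

end

theorem stmt_9_general {n : ℕ} (u : ZMod n → E3)
    (hgp : GeneralPosition u)
    (i j : ZMod n) (hj₁ : j ≠ i - 1) (hj₂ : j ≠ i) (hj₃ : j ≠ i + 1) :
    (polyEdge u i ∩ polyEdge u j).Nonempty ↔
      (Real.sign (det3 (u i) (u (i + 1)) (u j)) =
         Real.sign (det3 (u (i + 1)) (u j) (u (j + 1))) ∧
       Real.sign (det3 (u i) (u (i + 1)) (u (j + 1))) =
         Real.sign (det3 (u i) (u j) (u (j + 1))) ∧
       Real.sign (det3 (u i) (u (i + 1)) (u j)) =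
         - Real.sign (det3 (u i) (u (i + 1)) (u (j + 1)))) := by
  have h10 : (1 : ZMod n) ≠ 0 := fun h =>
    hj₂ (by rw [← mul_one j, ← mul_one i, h, mul_zero, mul_zero])
  have hii : i ≠ i + 1 := fun h => h10 (left_eq_add.mp h)
  have hjj : j ≠ j + 1 := fun h => h10 (left_eq_add.mp h)
  have hij : i ≠ j + 1 := fun h => hj₁ (by rw [h, add_sub_cancel_right])
  have hij' : i + 1 ≠ j + 1 := fun h => hj₂ (add_right_cancel h).symm
  have h₁ := hgp i (i + 1) j hii hj₂.symm hj₃.symm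
  have h₂ := hgp i (i + 1) (j + 1) hii hij hij'
  have h₃ := hgp i j (j + 1) hj₂.symm hij hjj
  have h₄ := hgp (i + 1) j (j + 1) hj₃.symm hij' hjj
  rw [Real.sign_eq_sign_iff h₁ h₄, Real.sign_eq_sign_iff h₂ h₃, Real.sign_eq_neg_sign_iff h₁ h₂]
  have hCD : LinearIndependent ℝ ![u j, u (j + 1)] :=
    linearIndependent_of_det3_ne_zero (w := u i) (by rwa [det3_rotate])
  exact (sphericalEdge_inter_nonempty_iff (linearIndependent_of_det3_ne_zero h₁) hCD).trans
    (exists_mem_pairCone_inter_iff h₁ h₂ h₃ h₄)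

/-- Two non-adjacent edges of a spherical polygon with vertices in
general position intersect if and only if the stated sign relations between the
determinants hold. -/
theorem stmt_9 {n : ℕ} (u : ZMod n → E3)
    (hpoly : IsSphericalPolygon u)
    (hgp : GeneralPosition u)
    (i j : ZMod n) (hj₁ : j ≠ i - 1) (hj₂ : j ≠ i) (hj₃ : j ≠ i + 1) :
    (polyEdge u i ∩ polyEdge u j).Nonempty ↔
      (Real.sign (det3 (u i) (u (i + 1)) (u j)) =
         Real.sign (det3 (u (i + 1)) (u j) (u (j + 1))) ∧
       Real.sign (det3 (u i) (u (i + 1)) (u (j + 1))) =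
         Real.sign (det3 (u i) (u j) (u (j + 1))) ∧
       Real.sign (det3 (u i) (u (i + 1)) (u j)) =
         - Real.sign (det3 (u i) (u (i + 1)) (u (j + 1)))) :=
  stmt_9_general u hgp i j hj₁ hj₂ hj₃
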